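/- arXiv:1807.07792 — 2 statements merged into one kernel-verified Lean document; each statement's English description precedes it below -/
import Mathlib

section
/- For (S,z), (S',z') ∈ I, the orbit closure containment O_{(S',z')} ⊆ closure(O_{(S,z)}) holds if and only if S' ⊆ S and z' − z ∈ ⨁_{α∈S∖S'} ℂh_α. Consequently, the relation (S',z') ≤ (S,z) defined by the right-hand side is a partial order on I, and (Π, 0) is its unique maximal element. -/
/-!
The orbit of `z + ∑_{a ∈ S} e_a` contains every point `z + ∑_{a ∈ S} (y_a h_a + c_a e_a)` with
all `c_a ≠ 0` (the torus rescales the `e_a`, the unipotent part shifts the `h_a`-coordinates) and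
lies in the affine subspace `z + span {h_a, e_a | a ∈ S}`; as the first set is dense in the second,
the orbit closure is exactly this affine subspace. One orbit then lies in the closure of another iff
its base point `z' + ∑_{a ∈ S'} e_a` does, and comparing coefficients in the basis
`(h_a) ⊔ (e_a)` turns this into `S' ⊆ S` and `z' - z ∈ span {h_a | a ∈ S \ S'}`.
-/

open Submodule

section LinearIndependent

variable {ι R M : Type*} [Fintype ι] [Semiring R] [AddCommMonoid M] [Module R M] {v : ι → M}

theorem LinearIndependent.sum_smul_mem_span_image_iff (hv : LinearIndependent R v)
    {f : ι → R} {s : Set ι} : ∑ i, f i • v i ∈ span R (v '' s) ↔ ∀ i ∉ s, f i = 0 := by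
  have hsum : Finsupp.linearCombination R v (Finsupp.equivFunOnFinite.symm f)
      = ∑ i, f i • v i := by
    simp [Finsupp.linearCombination_apply, Finsupp.sum_fintype]
  constructor
  · rw [← hsum, Finsupp.mem_span_image_iff_linearCombination]
    rintro ⟨l, hls, hl⟩ i hi
    rw [hv.finsuppLinearCombination_injective hl] at hls
    simpa using (Finsupp.mem_supported' _ _).mp hls i hi
  · intro hf
    refine sum_mem fun i _ => ?_
    by_cases hi : i ∈ s
    · exact smul_mem _ _ (subset_span ⟨i, hi, rfl⟩)
    · simp [hf i hi]

end LinearIndependent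

namespace Toda

variable {L G σ : Type*} [AddCommGroup L] [Module ℂ L] [Group G]

def bOrbit (B : Subgroup G) (Ad : G →* (L ≃ₗ[ℂ] L)) (π : L →ₗ[ℂ] L) (x : L) : Set L :=
  {w | ∃ b ∈ B, w = π (Ad b x)}

def stratumSpan (h e : σ → L) (S : Finset σ) : Submodule ℂ L :=
  span ℂ (Sum.elim h e '' (Sum.inl '' S ∪ Sum.inr '' S))

theorem mem_stratumSpan_iff {h e : σ → L} {S : Finset σ} {x : L} :
    x ∈ stratumSpan h e S ↔
      ∃ y c : σ → ℂ, ∑ a ∈ S, y a • h a + ∑ a ∈ S, c a • e a = x := by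
  rw [stratumSpan, Set.image_union, Set.image_image, Set.image_image, span_union, mem_sup]
  simp only [Sum.elim_inl, Sum.elim_inr, mem_span_image_finset_iff_exists_fun']
  constructor
  · rintro ⟨_, ⟨y, rfl⟩, _, ⟨c, rfl⟩, rfl⟩
    exact ⟨y, c, rfl⟩
  · rintro ⟨y, c, rfl⟩
    exact ⟨_, ⟨y, rfl⟩, _, ⟨c, rfl⟩, rfl⟩

theorem stratumSpan_mono {h e : σ → L} {S S' : Finset σ} (hS : S' ⊆ S) :
    stratumSpan h e S' ≤ stratumSpan h e S := by
  unfold stratumSpan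
  gcongr

theorem span_image_sdiff_le_stratumSpan [DecidableEq σ] (h e : σ → L) (S S' : Finset σ) :
    span ℂ (h '' ↑(S \ S')) ≤ stratumSpan h e S := by
  refine span_mono ?_
  rintro _ ⟨a, ha, rfl⟩
  exact ⟨Sum.inl a, Or.inl ⟨a, Finset.mem_sdiff.mp ha |>.1, rfl⟩, rfl⟩

theorem subset_and_sub_mem_of_mem_stratumSpan [Fintype σ] [DecidableEq σ] {h e : σ → L}
    (hv : LinearIndependent ℂ (Sum.elim h e)) {S S' : Finset σ} {z z' : L}
    (hz : z ∈ span ℂ (h '' {a | a ∉ S})) (hz' : z' ∈ span ℂ (h '' {a | a ∉ S'}))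
    (hmem : z' + ∑ a ∈ S', e a - z ∈ stratumSpan h e S) :
    S' ⊆ S ∧ z' - z ∈ span ℂ (h '' ↑(S \ S')) := by
  have hh : LinearIndependent ℂ h := hv.comp Sum.inl Sum.inl_injective
  have hrange (s : Set σ) : span ℂ (h '' s) ≤ span ℂ (Set.range h) :=
    span_mono (Set.image_subset_range _ _)
  obtain ⟨d, hd⟩ := (mem_span_range_iff_exists_fun ℂ).mp (sub_mem (hrange _ hz') (hrange _ hz))
  have hcoeff : ∑ i, Sum.elim d (fun a => if a ∈ S' then 1 else 0) i • Sum.elim h e i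
      = z' + ∑ a ∈ S', e a - z := by
    simp only [Fintype.sum_sum_type, Sum.elim_inl, hd, Sum.elim_inr, ite_smul, one_smul,
      zero_smul, Finset.sum_ite_mem, Finset.univ_inter]
    abel
  rw [stratumSpan, ← hcoeff, hv.sum_smul_mem_span_image_iff] at hmem
  have hS'S : S' ⊆ S := fun a ha => by
    by_contra haS
    simpa [ha] using hmem (Sum.inr a) (by simp [haS])
  have hdS' : ∀ a ∈ S', d a = 0 := by
    have hz'z : z' - z ∈ span ℂ (h '' {a | a ∉ S'}) :=
      sub_mem hz' (span_mono (Set.image_mono fun a (ha : a ∉ S) h' => ha (hS'S h')) hz)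
    rw [← hd, hh.sum_smul_mem_span_image_iff] at hz'z
    exact fun a ha => hz'z a (by simpa using ha)
  refine ⟨hS'S, ?_⟩
  rw [← hd, hh.sum_smul_mem_span_image_iff]
  intro a ha
  by_cases haS' : a ∈ S'
  · exact hdS' a haS'
  · simpa using hmem (Sum.inl a) (by simpa [haS'] using ha)

section Orbits

variable [Fintype σ] {B T : Subgroup G} {Ad : G →* (L ≃ₗ[ℂ] L)} {π : L →ₗ[ℂ] L}
  {t : Submodule ℂ L} {h e : σ → L} {χ : σ → G → ℂ}

theorem bOrbit_subset_stratum
    (horbit : ∀ bb ∈ B, ∃ s ∈ T, ∃ ya : σ → ℂ,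
      ∀ v0 ∈ t, ∀ vneg : σ → ℂ,
        π (Ad bb (v0 + ∑ a, vneg a • e a))
          = (v0 + ∑ a, (ya a * vneg a) • h a) + ∑ a, ((χ a s)⁻¹ * vneg a) • e a)
    {S : Finset σ} {z : L} (hz : z ∈ t) :
    bOrbit B Ad π (z + ∑ a ∈ S, e a) ⊆ {w | w - z ∈ stratumSpan h e S} := by
  classical
  rintro w ⟨b, hb, rfl⟩
  obtain ⟨s, -, y, hy⟩ := horbit b hb
  have hw := hy z hz fun a => if a ∈ S then 1 else 0
  simp only [mul_ite, mul_one, mul_zero, ite_smul, zero_smul, one_smul, Finset.sum_ite_mem,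
    Finset.univ_inter] at hw
  rw [hw]
  exact mem_stratumSpan_iff.mpr ⟨y, fun a => (χ a s)⁻¹, by abel⟩

theorem mem_bOrbit (hTB : T ≤ B)
    (hT_t : ∀ s ∈ T, ∀ x ∈ t, Ad s x = x)
    (hT_neg : ∀ s ∈ T, ∀ a, Ad s (e a) = (χ a s)⁻¹ • e a)
    (hTsurj : ∀ c : σ → ℂ, (∀ a, c a ≠ 0) → ∃ s ∈ T, ∀ a, χ a s = c a)
    (hUfree : ∀ ya : σ → ℂ, ∃ bb ∈ B, ∀ v0 ∈ t, ∀ vneg : σ → ℂ,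
        π (Ad bb (v0 + ∑ a, vneg a • e a))
          = (v0 + ∑ a, (ya a * vneg a) • h a) + ∑ a, vneg a • e a)
    {S : Finset σ} {z : L} (hz : z ∈ t) (y c : σ → ℂ) (hc : ∀ a, c a ≠ 0) :
    z + ∑ a ∈ S, y a • h a + ∑ a ∈ S, c a • e a ∈ bOrbit B Ad π (z + ∑ a ∈ S, e a) := by
  classical
  obtain ⟨s, hsT, hχ⟩ := hTsurj (fun a => (c a)⁻¹) fun a => inv_ne_zero (hc a)
  obtain ⟨b, hbB, hb⟩ := hUfree fun a => y a * (c a)⁻¹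
  have hs : Ad s (z + ∑ a ∈ S, e a) = z + ∑ a, (if a ∈ S then c a else 0) • e a := by
    simp [hT_t s hsT z hz, hT_neg s hsT, hχ, ite_smul, Finset.sum_ite_mem]
  refine ⟨b * s, mul_mem hbB (hTB hsT), ?_⟩
  rw [map_mul, LinearEquiv.mul_apply, hs, hb z hz]
  simp [mul_ite, ite_smul, Finset.sum_ite_mem, mul_assoc, inv_mul_cancel₀ (hc _)]

theorem closure_bOrbit_eq [TopologicalSpace L] [IsTopologicalAddGroup L] [ContinuousSMul ℂ L]
    [T2Space L] [FiniteDimensional ℂ L] (hTB : T ≤ B)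
    (hT_t : ∀ s ∈ T, ∀ x ∈ t, Ad s x = x)
    (hT_neg : ∀ s ∈ T, ∀ a, Ad s (e a) = (χ a s)⁻¹ • e a)
    (hTsurj : ∀ c : σ → ℂ, (∀ a, c a ≠ 0) → ∃ s ∈ T, ∀ a, χ a s = c a)
    (horbit : ∀ bb ∈ B, ∃ s ∈ T, ∃ ya : σ → ℂ,
      ∀ v0 ∈ t, ∀ vneg : σ → ℂ,
        π (Ad bb (v0 + ∑ a, vneg a • e a))
          = (v0 + ∑ a, (ya a * vneg a) • h a) + ∑ a, ((χ a s)⁻¹ * vneg a) • e a)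
    (hUfree : ∀ ya : σ → ℂ, ∃ bb ∈ B, ∀ v0 ∈ t, ∀ vneg : σ → ℂ,
        π (Ad bb (v0 + ∑ a, vneg a • e a))
          = (v0 + ∑ a, (ya a * vneg a) • h a) + ∑ a, vneg a • e a)
    {S : Finset σ} {z : L} (hz : z ∈ t) :
    closure (bOrbit B Ad π (z + ∑ a ∈ S, e a)) = {w | w - z ∈ stratumSpan h e S} := by
  refine (closure_minimal (bOrbit_subset_stratum horbit hz)
    ((closed_of_finiteDimensional _).preimage (continuous_sub_right z))).antisymm ?_
  let F : (σ → ℂ) × (σ → ℂ) → L := fun p => z + ∑ a ∈ S, p.1 a • h a + ∑ a ∈ S, p.2 a • e a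
  have hF : Continuous F := by fun_prop
  let D : Set ((σ → ℂ) × (σ → ℂ)) := Set.univ ×ˢ Set.univ.pi fun _ => {0}ᶜ
  have hD : Dense D := dense_univ.prod (dense_pi _ fun _ _ => dense_compl_singleton 0)
  have hFD : F '' D ⊆ bOrbit B Ad π (z + ∑ a ∈ S, e a) := by
    rintro _ ⟨⟨y, c⟩, ⟨-, hc⟩, rfl⟩
    exact mem_bOrbit hTB hT_t hT_neg hTsurj hUfree hz y c fun a => hc a (Set.mem_univ a)
  intro w hw
  obtain ⟨y, c, hyc⟩ := mem_stratumSpan_iff.mp hw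
  refine closure_mono hFD (hF.range_subset_closure_image_dense hD ⟨(y, c), ?_⟩)
  simp only [F, add_assoc, hyc, add_sub_cancel]

end Orbits

end Toda

open Toda in
theorem stmt6_general
    (L : Type) [LieRing L] [LieAlgebra ℂ L] [FiniteDimensional ℂ L]
    [TopologicalSpace L] [IsTopologicalAddGroup L] [ContinuousSMul ℂ L] [T2Space L]
    (G : Type) [Group G]
    (Ad : G →* (L ≃ₗ[ℂ] L))
    (B T : Subgroup G) (hTB : T ≤ B)
    (σ : Type) [Fintype σ] [DecidableEq σ]
    (t : Submodule ℂ L)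
    (eα eneg : σ → L)
    (hbasis : LinearIndependent ℂ (Sum.elim (fun a : σ => ⁅eα a, eneg a⁆) eneg))
    (hαspan : t = Submodule.span ℂ (Set.range fun a : σ => ⁅eα a, eneg a⁆))
    (π : L →ₗ[ℂ] L)
    (χ : σ → G → ℂ)
    (hT_t : ∀ s ∈ T, ∀ h ∈ t, Ad s h = h)
    (hT_neg : ∀ s ∈ T, ∀ a, Ad s (eneg a) = (χ a s)⁻¹ • eneg a)
    (hTsurj : ∀ c : σ → ℂ, (∀ a, c a ≠ 0) → ∃ s ∈ T, ∀ a, χ a s = c a)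
    (horbit : ∀ bb ∈ B, ∃ s ∈ T, ∃ ya : σ → ℂ,
      ∀ v0 ∈ t, ∀ vneg : σ → ℂ,
        π (Ad bb (v0 + ∑ a, vneg a • eneg a))
          = (v0 + ∑ a, (ya a * vneg a) • ⁅eα a, eneg a⁆)
            + ∑ a, ((χ a s)⁻¹ * vneg a) • eneg a)
    (hUfree : ∀ ya : σ → ℂ, ∃ bb ∈ B, ∀ v0 ∈ t, ∀ vneg : σ → ℂ,
        π (Ad bb (v0 + ∑ a, vneg a • eneg a))
          = (v0 + ∑ a, (ya a * vneg a) • ⁅eα a, eneg a⁆) + ∑ a, vneg a • eneg a) :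
    -- closure order description
    ((∀ (S S' : Finset σ) (z z' : L),
        z ∈ Submodule.span ℂ ((fun a : σ => ⁅eα a, eneg a⁆) '' {a | a ∉ S}) →
        z' ∈ Submodule.span ℂ ((fun a : σ => ⁅eα a, eneg a⁆) '' {a | a ∉ S'}) →
        ({w | ∃ bb ∈ B, w = π (Ad bb (z' + ∑ a ∈ S', eneg a))}
            ⊆ closure {w | ∃ bb ∈ B, w = π (Ad bb (z + ∑ a ∈ S, eneg a))}
          ↔ S' ⊆ S ∧
            z' - z ∈ Submodule.span ℂ ((fun a : σ => ⁅eα a, eneg a⁆) '' ↑(S \ S'))))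
    -- (Π, 0) dominates every orbit in the closure order
    ∧ (∀ (S : Finset σ) (z : L),
        z ∈ Submodule.span ℂ ((fun a : σ => ⁅eα a, eneg a⁆) '' {a | a ∉ S}) →
        {w | ∃ bb ∈ B, w = π (Ad bb (z + ∑ a ∈ S, eneg a))}
          ⊆ closure {w | ∃ bb ∈ B,
              w = π (Ad bb ((0 : L) + ∑ a ∈ (Finset.univ : Finset σ), eneg a))})
    -- and it is the unique maximal element
    ∧ (∀ (S : Finset σ) (z : L),
        z ∈ Submodule.span ℂ ((fun a : σ => ⁅eα a, eneg a⁆) '' {a | a ∉ S}) →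
        (∀ (S' : Finset σ) (z' : L),
          z' ∈ Submodule.span ℂ ((fun a : σ => ⁅eα a, eneg a⁆) '' {a | a ∉ S'}) →
          {w | ∃ bb ∈ B, w = π (Ad bb (z' + ∑ a ∈ S', eneg a))}
            ⊆ closure {w | ∃ bb ∈ B, w = π (Ad bb (z + ∑ a ∈ S, eneg a))}) →
        S = Finset.univ ∧ z = 0)) := by
  have hmem_t (S : Finset σ) {z : L}
      (hz : z ∈ span ℂ ((fun a : σ => ⁅eα a, eneg a⁆) '' {a | a ∉ S})) : z ∈ t :=
    hαspan ▸ span_mono (Set.image_subset_range _ _) hz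
  have key (S S' : Finset σ) (z z' : L)
      (hz : z ∈ span ℂ ((fun a : σ => ⁅eα a, eneg a⁆) '' {a | a ∉ S}))
      (hz' : z' ∈ span ℂ ((fun a : σ => ⁅eα a, eneg a⁆) '' {a | a ∉ S'})) :
      bOrbit B Ad π (z' + ∑ a ∈ S', eneg a) ⊆ closure (bOrbit B Ad π (z + ∑ a ∈ S, eneg a))
        ↔ S' ⊆ S ∧ z' - z ∈ span ℂ ((fun a : σ => ⁅eα a, eneg a⁆) '' ↑(S \ S')) := by
    rw [closure_bOrbit_eq hTB hT_t hT_neg hTsurj horbit hUfree (hmem_t S hz)]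
    refine ⟨fun hsub => subset_and_sub_mem_of_mem_stratumSpan hbasis hz hz' (hsub ?_),
      fun ⟨hS'S, hzz⟩ => (bOrbit_subset_stratum horbit (hmem_t S' hz')).trans fun w hw => ?_⟩
    · simpa using
        mem_bOrbit hTB hT_t hT_neg hTsurj hUfree (hmem_t S' hz') 0 1 fun _ => one_ne_zero
    · simpa using
        add_mem (stratumSpan_mono hS'S hw) (span_image_sdiff_le_stratumSpan _ _ S S' hzz)
  refine ⟨key, fun S z hz => ?_, fun S z hz hmax => ?_⟩
  · refine (key Finset.univ S 0 z (zero_mem _) hz).mpr ⟨S.subset_univ, ?_⟩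
    rwa [sub_zero, Finset.coe_sdiff, Finset.coe_univ, ← Set.compl_eq_univ_sdiff]
  · obtain ⟨hS, hz0⟩ := (key S Finset.univ z 0 hz (zero_mem _)).mp (hmax _ 0 (zero_mem _))
    exact ⟨Finset.univ_subset_iff.mp hS, by simpa using hz0⟩

/-- For `(S,z), (S',z') ∈ I`, one has
`O_{(S',z')} ⊆ closure O_{(S,z)}` iff `S' ⊆ S` and `z' − z ∈ ⨁_{α∈S∖S'} ℂ h_α`.
Consequently this relation is the closure order on `B`-orbits in `V_Toda`,
every orbit lies in the closure of `O_{(Π,0)}`, and `(Π,0)` is the unique such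
maximal element. (`L` carries its canonical Hausdorff vector-space topology.) -/
theorem stmt6
    (L : Type) [LieRing L] [LieAlgebra ℂ L] [FiniteDimensional ℂ L]
    [TopologicalSpace L] [IsTopologicalAddGroup L] [ContinuousSMul ℂ L] [T2Space L]
    (G : Type) [Group G]
    (Ad : G →* (L ≃ₗ[ℂ] L))
    (B T : Subgroup G) (hTB : T ≤ B)
    (σ : Type) [Fintype σ] [DecidableEq σ]
    (t u : Submodule ℂ L)
    (eα eneg : σ → L)
    (hαt : ∀ a, ⁅eα a, eneg a⁆ ∈ t)
    (hbasis : LinearIndependent ℂ (Sum.elim (fun a : σ => ⁅eα a, eneg a⁆) eneg))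
    (hαspan : t = Submodule.span ℂ (Set.range fun a : σ => ⁅eα a, eneg a⁆))
    (π : L →ₗ[ℂ] L)
    (hπ_t : ∀ x ∈ t, π x = x)
    (hπ_neg : ∀ a, π (eneg a) = eneg a)
    (hπ_u : ∀ x ∈ u, π x = 0)
    (χ : σ → G → ℂ)
    (hT_t : ∀ s ∈ T, ∀ h ∈ t, Ad s h = h)
    (hT_neg : ∀ s ∈ T, ∀ a, Ad s (eneg a) = (χ a s)⁻¹ • eneg a)
    (hTsurj : ∀ c : σ → ℂ, (∀ a, c a ≠ 0) → ∃ s ∈ T, ∀ a, χ a s = c a)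
    (horbit : ∀ bb ∈ B, ∃ s ∈ T, ∃ ya : σ → ℂ,
      ∀ v0 ∈ t, ∀ vneg : σ → ℂ,
        π (Ad bb (v0 + ∑ a, vneg a • eneg a))
          = (v0 + ∑ a, (ya a * vneg a) • ⁅eα a, eneg a⁆)
            + ∑ a, ((χ a s)⁻¹ * vneg a) • eneg a)
    (hUfree : ∀ ya : σ → ℂ, ∃ bb ∈ B, ∀ v0 ∈ t, ∀ vneg : σ → ℂ,
        π (Ad bb (v0 + ∑ a, vneg a • eneg a))
          = (v0 + ∑ a, (ya a * vneg a) • ⁅eα a, eneg a⁆) + ∑ a, vneg a • eneg a) :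
    -- closure order description
    ((∀ (S S' : Finset σ) (z z' : L),
        z ∈ Submodule.span ℂ ((fun a : σ => ⁅eα a, eneg a⁆) '' {a | a ∉ S}) →
        z' ∈ Submodule.span ℂ ((fun a : σ => ⁅eα a, eneg a⁆) '' {a | a ∉ S'}) →
        ({w | ∃ bb ∈ B, w = π (Ad bb (z' + ∑ a ∈ S', eneg a))}
            ⊆ closure {w | ∃ bb ∈ B, w = π (Ad bb (z + ∑ a ∈ S, eneg a))}
          ↔ S' ⊆ S ∧
            z' - z ∈ Submodule.span ℂ ((fun a : σ => ⁅eα a, eneg a⁆) '' ↑(S \ S'))))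
    -- (Π, 0) dominates every orbit in the closure order
    ∧ (∀ (S : Finset σ) (z : L),
        z ∈ Submodule.span ℂ ((fun a : σ => ⁅eα a, eneg a⁆) '' {a | a ∉ S}) →
        {w | ∃ bb ∈ B, w = π (Ad bb (z + ∑ a ∈ S, eneg a))}
          ⊆ closure {w | ∃ bb ∈ B,
              w = π (Ad bb ((0 : L) + ∑ a ∈ (Finset.univ : Finset σ), eneg a))})
    -- and it is the unique maximal element
    ∧ (∀ (S : Finset σ) (z : L),
        z ∈ Submodule.span ℂ ((fun a : σ => ⁅eα a, eneg a⁆) '' {a | a ∉ S}) →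
        (∀ (S' : Finset σ) (z' : L),
          z' ∈ Submodule.span ℂ ((fun a : σ => ⁅eα a, eneg a⁆) '' {a | a ∉ S'}) →
          {w | ∃ bb ∈ B, w = π (Ad bb (z' + ∑ a ∈ S', eneg a))}
            ⊆ closure {w | ∃ bb ∈ B, w = π (Ad bb (z + ∑ a ∈ S, eneg a))}) →
        S = Finset.univ ∧ z = 0)) :=
  stmt6_general L G Ad B T hTB σ t eα eneg hbasis hαspan π χ hT_t hT_neg hTsurj horbit hUfree
end

section
/- Let H₀ := b ⊕ ⨁_{α∈Π} g_{-α} and H₀ˣ := b + Σ_{α∈Π} g_{-α}ˣ (elements of H₀ whose g_{-α}-component is nonzero for every simple root α). Then B · S_reg = H₀ˣ, i.e., the set of all Ad_b(s) with b ∈ B and s ∈ S_reg equals H₀ˣ. (This uses Kostant's isomorphism U · S_reg = ξ + b.) -/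
/-!
Since `B = T * U`, one has `B · S_reg = T · (U · S_reg) = T · (ξ + b)` by Kostant's theorem.
The torus preserves `b` and acts on `ξ = Σ e_{-α}` by rescaling each `e_{-α}` by `α(t)⁻¹`; as every
tuple of nonzero scalars occurs, `T · (ξ + b)` is exactly `H₀ˣ`.
-/

open scoped Pointwise

theorem Subgroup.coe_eq_mul_of_forall_mem {G : Type*} [Group G] {B U T : Subgroup G}
    (hUB : U ≤ B) (hTB : T ≤ B) (hBdec : ∀ b ∈ B, ∃ t ∈ T, ∃ u ∈ U, b = t * u) :
    (B : Set G) = T * U := by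
  refine subset_antisymm (fun b hb => ?_) (Set.mul_subset_iff.2 fun t ht u hu => ?_)
  · obtain ⟨t, ht, u, hu, rfl⟩ := hBdec b hb
    exact Set.mul_mem_mul ht hu
  · exact B.mul_mem (hTB ht) (hUB hu)

section TorusOrbit

variable {G V K σ : Type*} [Group G] [AddCommMonoid V] [DistribMulAction G V]
  [GroupWithZero K] [SMul K V] [Fintype σ] {T : Subgroup G} {W : Set V} {e : σ → V}
  {χ : σ → G → K}

theorem smul_sum_add_of_smul_eq (hT_neg : ∀ t ∈ T, ∀ a, t • e a = (χ a t)⁻¹ • e a)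
    {t : G} (ht : t ∈ T) (y : V) :
    t • (∑ a, e a + y) = t • y + ∑ a, (χ a t)⁻¹ • e a := by
  rw [smul_add, Finset.smul_sum, add_comm]
  simp only [hT_neg t ht]

theorem Subgroup.coe_smul_sum_vadd_eq (hT_W : ∀ t ∈ T, ∀ y ∈ W, t • y ∈ W)
    (hT_neg : ∀ t ∈ T, ∀ a, t • e a = (χ a t)⁻¹ • e a) (hχ0 : ∀ t ∈ T, ∀ a, χ a t ≠ 0)
    (hTsurj : ∀ c : σ → K, (∀ a, c a ≠ 0) → ∃ t ∈ T, ∀ a, χ a t = c a) :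
    (T : Set G) • ((∑ a, e a) +ᵥ W) =
      {x | ∃ y ∈ W, ∃ c : σ → K, (∀ a, c a ≠ 0) ∧ x = y + ∑ a, c a • e a} := by
  ext x
  simp only [Set.mem_smul, Set.mem_vadd_set, vadd_eq_add, SetLike.mem_coe, Set.mem_ofPred_eq]
  constructor
  · rintro ⟨t, ht, _, ⟨y, hy, rfl⟩, rfl⟩
    exact ⟨t • y, hT_W t ht y hy, fun a => (χ a t)⁻¹, fun a => inv_ne_zero (hχ0 t ht a),
      smul_sum_add_of_smul_eq hT_neg ht y⟩
  · rintro ⟨y, hy, c, hc, rfl⟩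
    obtain ⟨t, ht, hχt⟩ := hTsurj (fun a => (c a)⁻¹) fun a => inv_ne_zero (hc a)
    refine ⟨t, ht, _, ⟨t⁻¹ • y, hT_W _ (T.inv_mem ht) y hy, rfl⟩, ?_⟩
    rw [smul_sum_add_of_smul_eq hT_neg ht, smul_inv_smul]
    simp only [hχt, inv_inv]

end TorusOrbit

/-- With `H₀ = b ⊕ ⨁_{α∈Π} g_{-α}` and
`H₀ˣ = b + Σ_{α∈Π} g_{-α}ˣ`, one has `B · S_reg = H₀ˣ`:
`{Ad_b(s) : b ∈ B, s ∈ S_reg} = H₀ˣ`, where `S_reg = ξ + ker(ad_η)`.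
(Kostant's isomorphism `U · S_reg = ξ + b` is the hypothesis `hKostant`.) -/
theorem stmt16
    (L : Type) [LieRing L] [LieAlgebra ℂ L]
    (G : Type) [Group G]
    (Ad : G →* (L ≃ₗ[ℂ] L))
    (B U T : Subgroup G) (hUB : U ≤ B) (hTB : T ≤ B)
    (hBdec : ∀ bb ∈ B, ∃ s ∈ T, ∃ uu ∈ U, bb = s * uu)  -- B = T ⋉ U
    (σ : Type) [Fintype σ]
    (bsub : Submodule ℂ L)
    (eneg : σ → L)
    (ξ η : L) (hξ : ξ = ∑ a, eneg a)
    (χ : σ → G → ℂ)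
    (hT_b : ∀ s ∈ T, ∀ y ∈ bsub, Ad s y ∈ bsub)
    (hT_neg : ∀ s ∈ T, ∀ a, Ad s (eneg a) = (χ a s)⁻¹ • eneg a)
    (hχ0 : ∀ s ∈ T, ∀ a, χ a s ≠ 0)
    (hTsurj : ∀ c : σ → ℂ, (∀ a, c a ≠ 0) → ∃ s ∈ T, ∀ a, χ a s = c a)
    -- Kostant: U · S_reg = ξ + b
    (hKostant : {x : L | ∃ uu ∈ U, ∃ w : L, ⁅η, w⁆ = 0 ∧ x = Ad uu (ξ + w)}
        = {x : L | ∃ y ∈ bsub, x = ξ + y}) :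
    {x : L | ∃ bb ∈ B, ∃ w : L, ⁅η, w⁆ = 0 ∧ x = Ad bb (ξ + w)}
      = {x : L | ∃ y ∈ bsub, ∃ c : σ → ℂ, (∀ a, c a ≠ 0) ∧ x = y + ∑ a, c a • eneg a} := by
  let _ : DistribMulAction G L := DistribMulAction.compHom L Ad
  have orbit_eq (H : Subgroup G) : {x : L | ∃ g ∈ H, ∃ w : L, ⁅η, w⁆ = 0 ∧ x = Ad g (ξ + w)} =
      (H : Set G) • (ξ +ᵥ {w : L | ⁅η, w⁆ = 0}) := by
    ext x
    simp only [Set.mem_smul, Set.mem_vadd_set, vadd_eq_add, SetLike.mem_coe, Set.mem_ofPred_eq]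
    exact ⟨fun ⟨g, hg, w, hw, hx⟩ => ⟨g, hg, _, ⟨w, hw, rfl⟩, hx.symm⟩,
      fun ⟨g, hg, _, ⟨w, hw, rfl⟩, hx⟩ => ⟨g, hg, w, hw, hx.symm⟩⟩
  have U_smul_slice : (U : Set G) • (ξ +ᵥ {w : L | ⁅η, w⁆ = 0}) = ξ +ᵥ (bsub : Set L) := by
    rw [← orbit_eq, hKostant]
    ext x; simp [Set.mem_vadd_set, eq_comm]
  rw [orbit_eq, Subgroup.coe_eq_mul_of_forall_mem hUB hTB hBdec, mul_smul, U_smul_slice, hξ]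
  exact Subgroup.coe_smul_sum_vadd_eq hT_b hT_neg hχ0 hTsurj
end
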